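/- Let G be a simple graph and let C be a cycle of G containing consecutive vertices t, v, w, x, y, z. Let b be a vertex of G not on C that is adjacent to both t and x, and suppose v is adjacent to y in G. Then G contains a cycle of length |C| + 1 whose vertex set is V(C) ∪ {b}; the new cycle is obtained from C by replacing the path (t, v, w, x, y, z) with the path (t, b, x, w, v, y, z). -/

import Mathlib

/-!
Rotating and possibly reversing `C`, we may write it as the closed walk
`t → v → w → x → y → z ⇝ t` whose final segment `q : z ⇝ t` is a path avoiding `t, v, w, x, y`:
in a cycle, the two neighbours of `t` are its second and penultimate vertices, and each further
edge is then forced to be the next one along the path. The new cycle is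
`t → b → x → w → v → y → z ⇝ t`; it is again a cycle because its vertices are those of `C`
together with the new vertex `b`, each met once.
-/

namespace SimpleGraph.Walk

variable {V : Type*} {G : SimpleGraph V}

theorem IsTrail.length_eq_of_forall_mem_edges_iff {u v u' v' : V} {p : G.Walk u v}
    {q : G.Walk u' v'} (hp : p.IsTrail) (hq : q.IsTrail) (h : ∀ e, e ∈ p.edges ↔ e ∈ q.edges) :
    p.length = q.length := by
  rw [← length_edges, ← length_edges]
  exact ((List.perm_ext_iff_of_nodup hp.edges_nodup hq.edges_nodup).2 h).length_eq

theorem mem_support_iff_of_forall_mem_edges_iff {u v u' v' w : V} {p : G.Walk u v}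
    {q : G.Walk u' v'} (hp : ¬p.Nil) (hq : ¬q.Nil) (h : ∀ e, e ∈ p.edges ↔ e ∈ q.edges) :
    w ∈ p.support ↔ w ∈ q.support := by
  simp only [mem_support_iff_exists_mem_edges_of_not_nil hp,
    mem_support_iff_exists_mem_edges_of_not_nil hq, h]

theorem IsPath.exists_eq_cons_of_mem_edges {u v w : V} {p : G.Walk u v} (hp : p.IsPath)
    (h : s(u, w) ∈ p.edges) : ∃ (huw : G.Adj u w) (q : G.Walk w v), p = cons huw q := by
  have hnil : ¬p.Nil := edges_eq_nil.not.mp (List.ne_nil_of_mem h)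
  obtain rfl := hp.eq_snd_of_mem_edges h
  exact ⟨p.adj_snd hnil, p.tail, (p.cons_tail_eq hnil).symm⟩

theorem IsCycle.exists_cons_of_mem_edges {u t v : V} {c : G.Walk u u} (hc : c.IsCycle)
    (h : s(t, v) ∈ c.edges) : ∃ (htv : G.Adj t v) (q : G.Walk v t),
      (cons htv q).IsCycle ∧ ∀ e, e ∈ (cons htv q).edges ↔ e ∈ c.edges := by
  classical
  have ht := c.fst_mem_support_of_mem_edges h
  set d := c.rotate t ht
  have hd : d.IsCycle := hc.rotate ht
  have hde : ∀ e, e ∈ d.edges ↔ e ∈ c.edges := fun _ => (c.rotate_edges t ht).mem_iff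
  suffices ∃ d' : G.Walk t t, d'.IsCycle ∧ d'.snd = v ∧ ∀ e, e ∈ d'.edges ↔ e ∈ c.edges by
    obtain ⟨d', hd', rfl, hd'e⟩ := this
    have hd'cons := d'.cons_tail_eq hd'.not_nil
    rw [← hd'cons] at hd' hd'e
    exact ⟨_, _, hd', hd'e⟩
  have hv : v ∈ d.toSubgraph.neighborSet t := adj_toSubgraph_iff_mem_edges.2 ((hde _).2 h)
  rw [hd.neighborSet_toSubgraph_endpoint] at hv
  rcases hv with rfl | rfl
  · exact ⟨d, hd, rfl, hde⟩
  · exact ⟨d.reverse, hd.reverse, d.snd_reverse, by simpa [edges_reverse] using hde⟩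

section Reroute

variable {t v w x y z b : V}

def reroute (hbt : G.Adj b t) (hbx : G.Adj b x) (hwx : G.Adj w x) (hvw : G.Adj v w)
    (hvy : G.Adj v y) (hyz : G.Adj y z) (q : G.Walk z t) : G.Walk t t :=
  cons hbt.symm (cons hbx (cons hwx.symm (cons hvw.symm (cons hvy (cons hyz q)))))

variable {htv : G.Adj t v} {hvw : G.Adj v w} {hwx : G.Adj w x} {hxy : G.Adj x y}
  {hyz : G.Adj y z} {q : G.Walk z t} (hbt : G.Adj b t) (hbx : G.Adj b x) (hvy : G.Adj v y)

theorem IsCycle.reroute (hc : (cons htv (cons hvw (cons hwx (cons hxy (cons hyz q))))).IsCycle)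
    (hb : b ∉ (cons htv (cons hvw (cons hwx (cons hxy (cons hyz q))))).support) :
    (reroute hbt hbx hwx hvw hvy hyz q).IsCycle := by
  have htq := q.end_mem_support
  have hbq : b ∉ q.support := fun h => hb (by simp [h])
  have htbq : s(t, b) ∉ q.edges := fun h => hbq (q.snd_mem_support_of_mem_edges h)
  rw [Walk.reroute, cons_isCycle_iff]
  rw [cons_isCycle_iff] at hc
  simp only [cons_isPath_iff, support_cons, List.mem_cons, not_or, edges_cons] at hc hb ⊢
  grind [Sym2.eq_iff]

theorem IsTrail.edges_reroute
    (hc : (cons htv (cons hvw (cons hwx (cons hxy (cons hyz q))))).IsTrail) :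
    {e | e ∈ (reroute hbt hbx hwx hvw hvy hyz q).edges} =
      ({e | e ∈ (cons htv (cons hvw (cons hwx (cons hxy (cons hyz q))))).edges} \
        {s(t, v), s(v, w), s(w, x), s(x, y), s(y, z)}) ∪
          {s(t, b), s(b, x), s(x, w), s(w, v), s(v, y), s(y, z)} := by
  have hnd := hc.edges_nodup
  simp only [edges_cons, List.nodup_cons, List.mem_cons, not_or] at hnd
  ext e
  simp only [Walk.reroute, edges_cons, Set.mem_ofPred_eq, Set.mem_union, Set.mem_sdiff,
    Set.mem_insert_iff, Set.mem_singleton_iff, List.mem_cons]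
  grind [Sym2.eq_swap]

end Reroute

end SimpleGraph.Walk

open SimpleGraph Walk in
/-- First replacement of Case 4c: if `t, v, w, x, y, z` are consecutive vertices of a
cycle `C`, `b` is a vertex off `C` adjacent to `t` and `x`, and `v` is adjacent to `y`
in `G`, then `G` has a cycle of length `|C| + 1` on vertex set `V(C) ∪ {b}`, obtained
from `C` by replacing the path `(t, v, w, x, y, z)` with the path
`(t, b, x, w, v, y, z)`. -/
theorem case4c_replacement {V : Type*} (G : SimpleGraph V) {v0 : V}
    (C : G.Walk v0 v0) (hC : C.IsCycle) (t v w x y z b : V)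
    (hdist : [t, v, w, x, y, z].Pairwise (· ≠ ·))
    (htv : s(t, v) ∈ C.edges) (hvw : s(v, w) ∈ C.edges) (hwx : s(w, x) ∈ C.edges)
    (hxy : s(x, y) ∈ C.edges) (hyz : s(y, z) ∈ C.edges)
    (hb : b ∉ C.support) (hbt : G.Adj b t) (hbx : G.Adj b x) (hvy : G.Adj v y) :
    ∃ (w0 : V) (C' : G.Walk w0 w0), C'.IsCycle ∧ C'.length = C.length + 1 ∧
      (∀ s, s ∈ C'.support ↔ s ∈ C.support ∨ s = b) ∧
      {e | e ∈ C'.edges} =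
        ({e | e ∈ C.edges} \ {s(t, v), s(v, w), s(w, x), s(x, y), s(y, z)}) ∪
          {s(t, b), s(b, x), s(x, w), s(w, v), s(v, y), s(y, z)} := by
  simp only [List.pairwise_cons, List.forall_mem_cons, List.not_mem_nil, IsEmpty.forall_iff,
    implies_true, List.Pairwise.nil, and_true] at hdist
  obtain ⟨htv', q, hD, hDe⟩ := hC.exists_cons_of_mem_edges htv
  have hq := ((cons_isCycle_iff _ _).1 hD).1
  obtain ⟨hvw', q1, rfl⟩ := hq.exists_eq_cons_of_mem_edges (w := w)
    (by grind [edges_cons, Sym2.eq_iff])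
  obtain ⟨hwx', q2, rfl⟩ := hq.of_cons.exists_eq_cons_of_mem_edges (w := x)
    (by grind [edges_cons, Sym2.eq_iff])
  obtain ⟨hxy', q3, rfl⟩ := hq.of_cons.of_cons.exists_eq_cons_of_mem_edges (w := y)
    (by grind [edges_cons, Sym2.eq_iff])
  obtain ⟨hyz', q, rfl⟩ := hq.of_cons.of_cons.of_cons.exists_eq_cons_of_mem_edges (w := z)
    (by grind [edges_cons, Sym2.eq_iff])
  have hDs s := mem_support_iff_of_forall_mem_edges_iff hD.not_nil hC.not_nil hDe (w := s)
  refine ⟨t, _, hD.reroute hbt hbx hvy (by rwa [hDs]), ?_, fun s => ?_,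
    by simpa only [hDe] using hD.isTrail.edges_reroute hbt hbx hvy⟩
  · simp [reroute, ← hD.isTrail.length_eq_of_forall_mem_edges_iff hC.isTrail hDe]
  · rw [← hDs]
    simp only [reroute, support_cons, List.mem_cons]
    tauto
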